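/- arXiv:0912.1266 — 7 statements merged into one kernel-verified Lean document; each statement's English description precedes it below -/
import Mathlib

section
/- Let S be a semigroup, T a subsemigroup of S, and let u, v ∈ S with u ℛ^T v. Let p, q ∈ T be such that up = v and vq = u. Then the map ρ_p : x ↦ xp maps the ℒ^T-class L_u of u into the ℒ^T-class L_v of v, the map ρ_q : x ↦ xq maps L_v into L_u, these maps preserve ℛ^T-classes (x ℛ^T xp for all x ∈ L_u and y ℛ^T yq for all y ∈ L_v), and they are mutually inverse bijections between L_u and L_v (xpq = x for all x ∈ L_u and yqp = y for all y ∈ L_v). -/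
namespace GreenIndexPaper

variable {S : Type*} [Semigroup S]

/-- The subset `u·T¹ = {u} ∪ uT` of `S` (equivalently, `u T¹` computed in `S¹`). -/
def rset (T : Subsemigroup S) (u : S) : Set S := insert u {x | ∃ t ∈ T, x = u * t}

/-- The subset `T¹·u = {u} ∪ Tu` of `S`. -/
def lset (T : Subsemigroup S) (u : S) : Set S := insert u {x | ∃ t ∈ T, x = t * u}

/-- The relative Green relation `ℛ^T`. -/
def RrelT (T : Subsemigroup S) (u v : S) : Prop := rset T u = rset T v

/-- The relative Green relation `ℒ^T`. -/
def LrelT (T : Subsemigroup S) (u v : S) : Prop := lset T u = lset T v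

/-- The relative Green relation `ℋ^T = ℛ^T ∩ ℒ^T`. -/
def HrelT (T : Subsemigroup S) (u v : S) : Prop := RrelT T u v ∧ LrelT T u v

/-- `H` is an `ℋ^T`-class of `S`. -/
def IsHClassIn (T : Subsemigroup S) (H : Set S) : Prop := ∃ a : S, H = {x | HrelT T a x}

/-- `T` has finite Green index in `S`: the complement `S \ T` is a union of finitely many
`ℋ^T`-classes. -/
def FiniteGreenIndex (T : Subsemigroup S) : Prop :=
  ∃ F : Finset S, (∀ c ∈ F, c ∉ T) ∧ ∀ s : S, s ∉ T → ∃ c ∈ F, HrelT T s c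

/-- The subset `T¹ = T ∪ {1}` of `S¹ = WithOne S`. -/
def T1 (T : Subsemigroup S) : Set (WithOne S) := insert 1 ((↑) '' (T : Set S))

/-- The subset `H·t` of `S¹`, for `H ⊆ S` and `t ∈ S¹`. -/
def setMulR (H : Set S) (t : WithOne S) : Set (WithOne S) :=
  {x | ∃ h ∈ H, x = (h : WithOne S) * t}

/-- The stabilizer `Stab(H) = {t ∈ T¹ : Ht = H}`, as a subset of `S¹`. -/
def stabSet (T : Subsemigroup S) (H : Set S) : Set (WithOne S) :=
  {t | t ∈ T1 T ∧ setMulR H t = (↑) '' H}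

theorem one_mem_stabSet (T : Subsemigroup S) (H : Set S) : (1 : WithOne S) ∈ stabSet T H := by
  refine ⟨Set.mem_insert _ _, ?_⟩
  ext x
  constructor
  · rintro ⟨h, hh, rfl⟩
    exact ⟨h, hh, (mul_one _).symm⟩
  · rintro ⟨h, hh, rfl⟩
    exact ⟨h, hh, (mul_one _).symm⟩

theorem mul_mem_stabSet {T : Subsemigroup S} {H : Set S} {s t : WithOne S}
    (hs : s ∈ stabSet T H) (ht : t ∈ stabSet T H) : s * t ∈ stabSet T H := by
  obtain ⟨hsT, hsH⟩ := hs
  obtain ⟨htT, htH⟩ := ht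
  constructor
  · rcases hsT with rfl | ⟨s', hs', rfl⟩
    · rwa [one_mul]
    · rcases htT with rfl | ⟨t', ht', rfl⟩
      · rw [mul_one]; exact Or.inr ⟨s', hs', rfl⟩
      · exact Or.inr ⟨s' * t', T.mul_mem hs' ht', rfl⟩
  · ext x
    constructor
    · rintro ⟨h, hh, rfl⟩
      have h1 : (h : WithOne S) * s ∈ setMulR H s := ⟨h, hh, rfl⟩
      rw [hsH] at h1
      obtain ⟨g, hg, hgs⟩ := h1
      have h2 : (g : WithOne S) * t ∈ setMulR H t := ⟨g, hg, rfl⟩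
      rw [htH] at h2
      obtain ⟨k, hk, hkt⟩ := h2
      refine ⟨k, hk, ?_⟩
      rw [hkt, hgs, ← mul_assoc]
    · rintro ⟨k, hk, rfl⟩
      have h2 : ((k : WithOne S)) ∈ setMulR H t := by
        rw [htH]; exact ⟨k, hk, rfl⟩
      obtain ⟨g, hg, hgt⟩ := h2
      have h1 : ((g : WithOne S)) ∈ setMulR H s := by
        rw [hsH]; exact ⟨g, hg, rfl⟩
      obtain ⟨h, hh, hhs⟩ := h1
      exact ⟨h, hh, by rw [hgt, hhs, mul_assoc]⟩

/-- The stabilizer `Stab(H)` as a submonoid of `S¹`. -/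
def stabSubmonoid (T : Subsemigroup S) (H : Set S) : Submonoid (WithOne S) where
  carrier := stabSet T H
  one_mem' := one_mem_stabSet T H
  mul_mem' := mul_mem_stabSet

/-- The Schützenberger congruence `γ(H)` on `Stab(H)`. -/
def gammaCon (T : Subsemigroup S) (H : Set S) : Con (stabSubmonoid T H) where
  r x y := ∀ h ∈ H, (h : WithOne S) * (x : WithOne S) = (h : WithOne S) * (y : WithOne S)
  iseqv := ⟨fun _ _ _ => rfl, fun hxy h hh => (hxy h hh).symm,
    fun h1 h2 h hh => (h1 h hh).trans (h2 h hh)⟩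
  mul' := by
    rintro ⟨w, hwT, hwH⟩ ⟨x, hxT, hxH⟩ ⟨y, hyT, hyH⟩ ⟨z, hzT, hzH⟩ hwx hyz h hh
    have h1 : (h : WithOne S) * w ∈ setMulR H w := ⟨h, hh, rfl⟩
    rw [hwH] at h1
    obtain ⟨g, hg, hgw⟩ := h1
    have key : (h : WithOne S) * (w * y) = (h : WithOne S) * (x * z) := by
      calc (h : WithOne S) * (w * y) = ((h : WithOne S) * w) * y := by rw [mul_assoc]
        _ = (g : WithOne S) * y := by rw [hgw]
        _ = (g : WithOne S) * z := hyz g hg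
        _ = ((h : WithOne S) * w) * z := by rw [hgw]
        _ = ((h : WithOne S) * x) * z := by rw [hwx h hh]
        _ = (h : WithOne S) * (x * z) := by rw [mul_assoc]
    exact key

/-- The relative Schützenberger group `Γ(H) = Stab(H)/γ(H)`. -/
abbrev SchGroup (T : Subsemigroup S) (H : Set S) := (gammaCon T H).Quotient

/-- Representatives `h_i` for `i ∈ I¹ = I ∪ {1}`, with `h_1 = 1 ∈ S¹`. -/
def repOne {ι : Type*} (h : ι → S) : Option ι → WithOne S :=
  fun o => o.elim 1 fun i => (h i : WithOne S)

/-- `S` is finitely presented as a semigroup. -/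
def SemigroupFP (S : Type*) [Semigroup S] : Prop :=
  ∃ (n : ℕ) (π : FreeSemigroup (Fin n) →ₙ* S), Function.Surjective π ∧
    ∃ R : Finset (FreeSemigroup (Fin n) × FreeSemigroup (Fin n)),
      ∀ u v, (conGen fun x y => (x, y) ∈ R) u v ↔ π u = π v

/-- `M` is finitely presented as a monoid. -/
def MonoidFP (M : Type*) [Monoid M] : Prop :=
  ∃ (n : ℕ) (π : FreeMonoid (Fin n) →* M), Function.Surjective π ∧
    ∃ R : Finset (FreeMonoid (Fin n) × FreeMonoid (Fin n)),
      ∀ u v, (conGen fun x y => (x, y) ∈ R) u v ↔ π u = π v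

/-- A left ideal of a semigroup. -/
def IsLeftIdeal (L : Set S) : Prop := L.Nonempty ∧ ∀ s : S, ∀ x ∈ L, s * x ∈ L

/-- A right ideal of a semigroup. -/
def IsRightIdeal (R : Set S) : Prop := R.Nonempty ∧ ∀ s : S, ∀ x ∈ R, x * s ∈ R

/-- Residual finiteness: distinct elements can be separated by a homomorphism
into a finite semigroup. -/
def ResiduallyFiniteMul (M : Type*) [Mul M] : Prop :=
  ∀ x y : M, x ≠ y → ∃ (F : Type) (_ : Semigroup F) (_ : Finite F) (φ : M →ₙ* F), φ x ≠ φ y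

/-- `T` has finite Green index inside the subsemigroup `Ssub` of the ambient semigroup:
`Ssub \ T` is a union of finitely many `ℋ^T`-classes. -/
def FiniteGreenIndexIn (Ssub T : Subsemigroup S) : Prop :=
  ∃ F : Finset S, (∀ c ∈ F, c ∈ Ssub ∧ c ∉ T) ∧ ∀ s ∈ Ssub, s ∉ T → ∃ c ∈ F, HrelT T s c

/-- A subsemigroup is a group under the induced operation. -/
def IsGroupSub (T : Subsemigroup S) : Prop :=
  ∃ e ∈ T, (∀ t ∈ T, e * t = t ∧ t * e = t) ∧ ∀ t ∈ T, ∃ t' ∈ T, t * t' = e ∧ t' * t = e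

/-- The (out-)ball of radius `n`: elements expressible as a product of at most `n`
(and at least one) elements of `A`. -/
def ball (A : Finset S) (n : ℕ) : Set S :=
  {s | ∃ l : List S, l ≠ [] ∧ l.length ≤ n ∧ (∀ x ∈ l, x ∈ A) ∧
    (l.map ((↑) : S → WithOne S)).prod = (s : WithOne S)}

/-- The growth function of a semigroup with respect to a finite set `A`. -/
noncomputable def growth (A : Finset S) (n : ℕ) : ℕ := (ball A n).ncard

end GreenIndexPaper

open GreenIndexPaper

lemma lset_subset_of_mem {S : Type*} [Semigroup S] {T : Subsemigroup S} {a b : S}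
    (h : a ∈ lset T b) (p : S) : lset T (a * p) ⊆ lset T (b * p) := by
  rcases h with rfl | ⟨t, ht, rfl⟩
  · exact subset_rfl
  · rintro x (rfl | ⟨s, hs, rfl⟩)
    · exact Or.inr ⟨t, ht, mul_assoc t b p⟩
    · exact Or.inr ⟨s * t, T.mul_mem hs ht, by simp [mul_assoc]⟩

lemma lset_mul {S : Type*} [Semigroup S] {T : Subsemigroup S} {a b : S}
    (h : lset T a = lset T b) (p : S) : lset T (a * p) = lset T (b * p) := by
  have ha : a ∈ lset T b := h ▸ Set.mem_insert _ _
  have hb : b ∈ lset T a := h ▸ Set.mem_insert _ _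
  exact le_antisymm (lset_subset_of_mem ha p) (lset_subset_of_mem hb p)

lemma rrel_of_cancel {S : Type*} [Semigroup S] {T : Subsemigroup S} {x p q : S}
    (hp : p ∈ T) (hq : q ∈ T) (hxpq : x * p * q = x) : RrelT T x (x * p) := by
  apply le_antisymm
  · rintro y (rfl | ⟨t, ht, rfl⟩)
    · exact Or.inr ⟨q, hq, hxpq.symm⟩
    · exact Or.inr ⟨q * t, T.mul_mem hq ht, by rw [← mul_assoc, hxpq]⟩
  · rintro y (rfl | ⟨t, ht, rfl⟩)
    · exact Or.inr ⟨p, hp, rfl⟩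
    · exact Or.inr ⟨p * t, T.mul_mem hp ht, by rw [mul_assoc]⟩

lemma cancel_of_lrel {S : Type*} [Semigroup S] {T : Subsemigroup S} {x u p q : S}
    (hupq : u * p * q = u) (hxu : LrelT T x u) : x * p * q = x := by
  have hx : x ∈ lset T u := hxu ▸ Set.mem_insert _ _
  rcases hx with rfl | ⟨t, ht, rfl⟩
  · exact hupq
  · rw [mul_assoc t u p, mul_assoc t (u * p) q, hupq]

/-- relative Green's lemma. -/
theorem relative_greens_lemma
    {S : Type*} [Semigroup S] (T : Subsemigroup S) (u v p q : S)
    (hp : p ∈ T) (hq : q ∈ T) (huv : RrelT T u v)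
    (hup : u * p = v) (hvq : v * q = u) :
    (∀ x : S, LrelT T x u → LrelT T (x * p) v) ∧
    (∀ y : S, LrelT T y v → LrelT T (y * q) u) ∧
    (∀ x : S, LrelT T x u → RrelT T x (x * p)) ∧
    (∀ y : S, LrelT T y v → RrelT T y (y * q)) ∧
    (∀ x : S, LrelT T x u → x * p * q = x) ∧
    (∀ y : S, LrelT T y v → y * q * p = y) := by
  have hupq : u * p * q = u := by rw [hup, hvq]
  have hvqp : v * q * p = v := by rw [hvq, hup]
  refine ⟨fun x hx => ?_, fun y hy => ?_, fun x hx => ?_, fun y hy => ?_,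
    fun x hx => cancel_of_lrel hupq hx, fun y hy => cancel_of_lrel hvqp hy⟩
  · have := lset_mul hx p
    rwa [hup] at this
  · have := lset_mul hy q
    rwa [hvq] at this
  · exact rrel_of_cancel hp hq (cancel_of_lrel hupq hx)
  · exact rrel_of_cancel hq hp (cancel_of_lrel hvqp hy)
end

section
/- Let S be a semigroup, T a subsemigroup of S, H a T-relative ℋ-class of S, and h ∈ H an arbitrary element. Then Stab(H) = {t ∈ T^1 : ht ∈ H}, i.e. a t ∈ T^1 satisfies Ht = H if and only if ht ∈ H. -/
open GreenIndexPaper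


namespace GreenIndexPaper

variable {S : Type*} [Semigroup S]

lemma lset_mul_right (T : Subsemigroup S) (x s : S) :
    lset T (x * s) = (· * s) '' lset T x := by
  ext y
  constructor
  · rintro (rfl | ⟨u, hu, rfl⟩)
    · exact ⟨x, Or.inl rfl, rfl⟩
    · exact ⟨u * x, Or.inr ⟨u, hu, rfl⟩, mul_assoc u x s⟩
  · rintro ⟨z, (rfl | ⟨u, hu, rfl⟩), rfl⟩
    · exact Or.inl rfl
    · exact Or.inr ⟨u, hu, by exact mul_assoc u x s⟩

lemma rset_mul_subset (T : Subsemigroup S) {s : S} (hs : s ∈ T) (x : S) :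
    rset T (x * s) ⊆ rset T x := by
  rintro y (rfl | ⟨u, hu, rfl⟩)
  · exact Or.inr ⟨s, hs, rfl⟩
  · exact Or.inr ⟨s * u, T.mul_mem hs hu, mul_assoc x s u⟩

lemma key_translation {T : Subsemigroup S} {a h s : S} (hs : s ∈ T)
    (hh : HrelT T a h) (hhs : HrelT T a (h * s)) :
    (∀ k, HrelT T a k → HrelT T a (k * s)) ∧
    (∀ k, HrelT T a k → ∃ g, HrelT T a g ∧ g * s = k) := by
  obtain ⟨hrh, hlh⟩ := hh
  obtain ⟨hrs, hls⟩ := hhs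
  have hmem : h ∈ rset T (h * s) := by
    rw [← hrs, hrh]; exact Or.inl rfl
  have klh : ∀ k, HrelT T a k → k ∈ lset T h := by
    intro k hk
    rw [← hlh, hk.2]; exact Or.inl rfl
  rcases hmem with heq | ⟨u, hu, heq⟩
  · have fix : ∀ k, HrelT T a k → k * s = k := by
      intro k hk
      rcases klh k hk with rfl | ⟨v, hv, rfl⟩
      · exact heq.symm
      · rw [mul_assoc, ← heq]
    constructor
    · intro k hk; rw [fix k hk]; exact hk
    · intro k hk; exact ⟨k, hk, fix k hk⟩
  · have fix : ∀ k, HrelT T a k → k = (k * s) * u := by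
      intro k hk
      rcases klh k hk with rfl | ⟨v, hv, rfl⟩
      · exact heq
      · calc v * h = v * (h * s * u) := by rw [← heq]
          _ = v * h * s * u := by simp [mul_assoc]
    have part1 : ∀ k, HrelT T a k → HrelT T a (k * s) := by
      intro k hk
      refine ⟨?_, ?_⟩
      · have h1 : rset T (k * s) ⊆ rset T k := rset_mul_subset T hs k
        have h2 : rset T k ⊆ rset T (k * s) := by
          nth_rewrite 1 [fix k hk]
          exact rset_mul_subset T hu (k * s)
        have hk1 : rset T a = rset T k := hk.1
        show rset T a = rset T (k * s)
        rw [hk1]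
        exact le_antisymm h2 h1
      · calc lset T a = lset T (h * s) := hls
          _ = (· * s) '' lset T h := lset_mul_right T h s
          _ = (· * s) '' lset T k := by rw [← hlh, hk.2]
          _ = lset T (k * s) := (lset_mul_right T k s).symm
    constructor
    · exact part1
    · intro k hk
      refine ⟨k * u, ?_, ?_⟩
      · refine ⟨?_, ?_⟩
        · have hgs : (k * u) * s = k := by
            have : k ∈ lset T (h * s) := by rw [← hls, hk.2]; exact Or.inl rfl
            rcases this with rfl | ⟨v, hv, rfl⟩
            · rw [← heq]
            · calc v * (h * s) * u * s = v * (h * s * u * s) := by simp [mul_assoc]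
                _ = v * (h * s) := by rw [← heq]
          have h1 : rset T (k * u) ⊆ rset T k := rset_mul_subset T hu k
          have h2 : rset T k ⊆ rset T (k * u) := by
            nth_rewrite 1 [← hgs]
            exact rset_mul_subset T hs (k * u)
          have hk1 : rset T a = rset T k := hk.1
          show rset T a = rset T (k * u)
          rw [hk1]
          exact le_antisymm h2 h1
        · calc lset T a = lset T h := hlh
            _ = lset T (h * s * u) := by rw [← heq]
            _ = (· * u) '' lset T (h * s) := lset_mul_right T (h * s) u
            _ = (· * u) '' lset T k := by rw [← hls, hk.2]
            _ = lset T (k * u) := (lset_mul_right T k u).symm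
      · have : k ∈ lset T (h * s) := by rw [← hls, hk.2]; exact Or.inl rfl
        rcases this with rfl | ⟨v, hv, rfl⟩
        · rw [← heq]
        · calc v * (h * s) * u * s = v * (h * s * u * s) := by simp [mul_assoc]
            _ = v * (h * s) := by rw [← heq]

end GreenIndexPaper

/-- for `t ∈ T¹`, `Ht = H` if and only if `ht ∈ H`. -/
theorem mem_stabSet_iff
    {S : Type*} [Semigroup S] (T : Subsemigroup S) (H : Set S) (hH : IsHClassIn T H)
    (h : S) (hh : h ∈ H) :
    ∀ t ∈ T1 T, (t ∈ stabSet T H ↔ (h : WithOne S) * t ∈ ((↑) : S → WithOne S) '' H) := by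
  obtain ⟨a, rfl⟩ := hH
  intro t ht
  constructor
  · rintro ⟨-, hset⟩
    rw [← hset]
    exact ⟨h, hh, rfl⟩
  · intro hmem
    rcases ht with rfl | ⟨s, hsT, rfl⟩
    · exact one_mem_stabSet T _
    · obtain ⟨g, hg, hgeq⟩ := hmem
      have hgcoe : (g : WithOne S) = ((h * s : S) : WithOne S) := by
        rw [hgeq, WithOne.coe_mul]
      have hgs : HrelT T a (h * s) := by
        have hge : g = h * s := WithOne.coe_inj.mp hgcoe
        rw [← hge]; exact hg
      obtain ⟨p1, p2⟩ := GreenIndexPaper.key_translation hsT hh hgs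
      refine ⟨Or.inr ⟨s, hsT, rfl⟩, ?_⟩
      ext x
      constructor
      · rintro ⟨k, hk, rfl⟩
        exact ⟨k * s, p1 k hk, WithOne.coe_mul k s⟩
      · rintro ⟨k, hk, rfl⟩
        obtain ⟨g, hgmem, hgk⟩ := p2 k hk
        exact ⟨g, hgmem, by rw [← hgk, WithOne.coe_mul]⟩
end

section
/- Let S be a semigroup, T a subsemigroup of S, H a T-relative ℋ-class of S, and h ∈ H an arbitrary element. Then H = h·Stab(H), i.e. H = {ht : t ∈ Stab(H)}. -/
open GreenIndexPaper

namespace HclassAux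

variable {S : Type*} [Semigroup S] {T : Subsemigroup S}

lemma mem_rset_self (T : Subsemigroup S) (u : S) : u ∈ rset T u := Set.mem_insert _ _

lemma mem_lset_self (T : Subsemigroup S) (u : S) : u ∈ lset T u := Set.mem_insert _ _

lemma hrel_of_mem {a : S} {H : Set S} (hH : H = {x | HrelT T a x}) {u v : S}
    (hu : u ∈ H) (hv : v ∈ H) : rset T u = rset T v ∧ lset T u = lset T v := by
  rw [hH] at hu hv
  exact ⟨hu.1.symm.trans hv.1, hu.2.symm.trans hv.2⟩

lemma lset_mul (T : Subsemigroup S) (u t : S) :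
    lset T (u * t) = (fun x => x * t) '' lset T u := by
  ext x
  simp only [lset, Set.mem_insert_iff, Set.mem_image, Set.mem_setOf_eq]
  constructor
  · rintro (rfl | ⟨s, hs, rfl⟩)
    · exact ⟨u, Or.inl rfl, rfl⟩
    · exact ⟨s * u, Or.inr ⟨s, hs, rfl⟩, mul_assoc _ _ _⟩
  · rintro ⟨y, (rfl | ⟨s, hs, rfl⟩), rfl⟩
    · exact Or.inl rfl
    · exact Or.inr ⟨s, hs, mul_assoc _ _ _⟩

lemma mul_mem_hclass {a : S} {H : Set S} (hH : H = {x | HrelT T a x})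
    {h t : S} (hh : h ∈ H) (ht : t ∈ T) (hht : h * t ∈ H) :
    ∀ v ∈ H, v * t ∈ H := by
  intro v hv
  have hlv : lset T v = lset T h := (hrel_of_mem hH hv hh).2
  have hlvt : lset T (v * t) = lset T (h * t) := by
    rw [lset_mul, lset_mul, hlv]
  have h1 : h ∈ rset T (h * t) := by
    rw [← (hrel_of_mem hH hh hht).1]; exact mem_rset_self T h
  have h2 : v ∈ lset T h := by rw [← hlv]; exact mem_lset_self T v
  simp only [rset, Set.mem_insert_iff, Set.mem_setOf_eq] at h1
  simp only [lset, Set.mem_insert_iff, Set.mem_setOf_eq] at h2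
  have key : v * t = v ∨ ∃ r ∈ T, (v * t) * r = v := by
    rcases h1 with heq | ⟨r, hr, heq⟩
    · rcases h2 with rfl | ⟨s, hs, rfl⟩
      · exact Or.inl heq.symm
      · refine Or.inl ?_
        rw [mul_assoc, ← heq]
    · refine Or.inr ⟨r, hr, ?_⟩
      rcases h2 with rfl | ⟨s, hs, rfl⟩
      · exact heq.symm
      · rw [mul_assoc, mul_assoc, ← mul_assoc h t r, ← heq]
  have hrvt : rset T (v * t) = rset T v := by
    rcases key with heq | ⟨r, hr, heq⟩
    · rw [heq]
    · ext x
      simp only [rset, Set.mem_insert_iff, Set.mem_setOf_eq]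
      constructor
      · rintro (rfl | ⟨s, hs, rfl⟩)
        · exact Or.inr ⟨t, ht, rfl⟩
        · exact Or.inr ⟨t * s, T.mul_mem ht hs, mul_assoc _ _ _⟩
      · rintro (rfl | ⟨s, hs, rfl⟩)
        · exact Or.inr ⟨r, hr, heq.symm⟩
        · exact Or.inr ⟨r * s, T.mul_mem hr hs, by rw [← mul_assoc, heq]⟩
  rw [hH]; rw [hH] at hv hht
  exact ⟨hv.1.trans hrvt.symm, hht.2.trans hlvt.symm⟩

lemma mul_surj_hclass {a : S} {H : Set S} (hH : H = {x | HrelT T a x})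
    {h t : S} (hh : h ∈ H) (ht : t ∈ T) (hht : h * t ∈ H) :
    ∀ g ∈ H, ∃ v ∈ H, v * t = g := by
  intro g hg
  have h1 : h ∈ rset T (h * t) := by
    rw [← (hrel_of_mem hH hh hht).1]; exact mem_rset_self T h
  simp only [rset, Set.mem_insert_iff, Set.mem_setOf_eq] at h1
  have hg2 : g ∈ lset T (h * t) := by
    rw [(hrel_of_mem hH hht hg).2]; exact mem_lset_self T g
  simp only [lset, Set.mem_insert_iff, Set.mem_setOf_eq] at hg2
  rcases h1 with heq | ⟨r, hr, heq⟩
  · -- h = h * t, so right multiplication by t is the identity on H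
    have hstep : (h * t) * t = h * t := by conv_lhs => rw [← heq]
    refine ⟨g, hg, ?_⟩
    rcases hg2 with rfl | ⟨s, hs, rfl⟩
    · exact hstep
    · rw [mul_assoc, hstep]
  · -- h = (h * t) * r
    have hrH : (h * t) * r ∈ H := by rw [← heq]; exact hh
    have hgr : g * r ∈ H := mul_mem_hclass hH hht hr hrH g hg
    refine ⟨g * r, hgr, ?_⟩
    rcases hg2 with rfl | ⟨s, hs, rfl⟩
    · rw [← heq]
    · rw [mul_assoc, mul_assoc, ← mul_assoc (h * t) r t, ← heq]

lemma coe_mem_stabSet {a : S} {H : Set S} (hH : H = {x | HrelT T a x})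
    {h t : S} (hh : h ∈ H) (ht : t ∈ T) (hht : h * t ∈ H) :
    (↑t : WithOne S) ∈ stabSet T H := by
  refine ⟨Set.mem_insert_of_mem _ ⟨t, ht, rfl⟩, ?_⟩
  ext x
  constructor
  · rintro ⟨v, hv, rfl⟩
    exact ⟨v * t, mul_mem_hclass hH hh ht hht v hv, WithOne.coe_mul v t⟩
  · rintro ⟨g, hg, rfl⟩
    obtain ⟨v, hv, hvt⟩ := mul_surj_hclass hH hh ht hht g hg
    exact ⟨v, hv, by rw [← hvt, WithOne.coe_mul]⟩

end HclassAux

/-- `H = h · Stab(H)`. -/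
theorem hclass_eq_rep_mul_stab
    {S : Type*} [Semigroup S] (T : Subsemigroup S) (H : Set S) (hH : IsHClassIn T H)
    (h : S) (hh : h ∈ H) :
    ((↑) : S → WithOne S) '' H = {x : WithOne S | ∃ t ∈ stabSet T H, x = (h : WithOne S) * t} := by
  obtain ⟨a, hH⟩ := hH
  ext x
  constructor
  · rintro ⟨g, hg, rfl⟩
    have hg' : g ∈ rset T h := by
      rw [← (HclassAux.hrel_of_mem hH hg hh).1]
      exact HclassAux.mem_rset_self T g
    simp only [rset, Set.mem_insert_iff, Set.mem_setOf_eq] at hg'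
    rcases hg' with rfl | ⟨t, ht, rfl⟩
    · exact ⟨1, one_mem_stabSet T H, (mul_one _).symm⟩
    · exact ⟨↑t, HclassAux.coe_mem_stabSet hH hh ht hg, WithOne.coe_mul h t⟩
  · rintro ⟨t, htstab, rfl⟩
    have hx : (↑h : WithOne S) * t ∈ setMulR H t := ⟨h, hh, rfl⟩
    rw [htstab.2] at hx
    exact hx
end

section
/- Let S be a semigroup, T a subsemigroup of S, and let H and H' be T-relative ℋ-classes of S contained in the same ℒ^T-class of S. Then Stab(H) = Stab(H') and γ(H) = γ(H') (so the relative Schützenberger groups Γ(H) and Γ(H') are equal). -/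
namespace GreenIndexPaper

variable {S : Type*} [Semigroup S]

section Aux

variable {S : Type*} [Semigroup S]

lemma mem_T1_mul {T : Subsemigroup S} {u v : WithOne S}
    (hu : u ∈ T1 T) (hv : v ∈ T1 T) : u * v ∈ T1 T := by
  rcases hu with rfl | ⟨s', hs', rfl⟩
  · rwa [one_mul]
  · rcases hv with rfl | ⟨t', ht', rfl⟩
    · rw [mul_one]; exact Or.inr ⟨s', hs', rfl⟩
    · exact Or.inr ⟨s' * t', T.mul_mem hs' ht', rfl⟩

lemma mem_lset_iff {T : Subsemigroup S} {u v : S} :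
    v ∈ lset T u ↔ ∃ w ∈ T1 T, (v : WithOne S) = w * u := by
  constructor
  · rintro (rfl | ⟨t, ht, rfl⟩)
    · exact ⟨1, Set.mem_insert _ _, (one_mul _).symm⟩
    · exact ⟨(t : WithOne S), Or.inr ⟨t, ht, rfl⟩, rfl⟩
  · rintro ⟨w, (rfl | ⟨t, ht, rfl⟩), h⟩
    · rw [one_mul] at h
      exact Or.inl (WithOne.coe_inj.mp h)
    · right
      exact ⟨t, ht, WithOne.coe_inj.mp h⟩

lemma mem_rset_iff {T : Subsemigroup S} {u v : S} :
    v ∈ rset T u ↔ ∃ w ∈ T1 T, (v : WithOne S) = (u : WithOne S) * w := by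
  constructor
  · rintro (rfl | ⟨t, ht, rfl⟩)
    · exact ⟨1, Set.mem_insert _ _, (mul_one _).symm⟩
    · exact ⟨(t : WithOne S), Or.inr ⟨t, ht, rfl⟩, rfl⟩
  · rintro ⟨w, (rfl | ⟨t, ht, rfl⟩), h⟩
    · rw [mul_one] at h
      exact Or.inl (WithOne.coe_inj.mp h)
    · right
      exact ⟨t, ht, WithOne.coe_inj.mp h⟩

lemma self_mem_lset (T : Subsemigroup S) (u : S) : u ∈ lset T u := Set.mem_insert _ _
lemma self_mem_rset (T : Subsemigroup S) (u : S) : u ∈ rset T u := Set.mem_insert _ _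

lemma lset_subset {T : Subsemigroup S} {u v : S} {w : WithOne S}
    (hw : w ∈ T1 T) (h : (v : WithOne S) = w * u) : lset T v ⊆ lset T u := by
  intro x hx
  obtain ⟨w', hw', hx⟩ := mem_lset_iff.mp hx
  exact mem_lset_iff.mpr ⟨w' * w, mem_T1_mul hw' hw, by rw [hx, h, mul_assoc]⟩

lemma rset_subset {T : Subsemigroup S} {u v : S} {w : WithOne S}
    (hw : w ∈ T1 T) (h : (v : WithOne S) = (u : WithOne S) * w) : rset T v ⊆ rset T u := by
  intro x hx
  obtain ⟨w', hw', hx⟩ := mem_rset_iff.mp hx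
  exact mem_rset_iff.mpr ⟨w * w', mem_T1_mul hw hw', by rw [hx, h, mul_assoc]⟩

/-- Relative Green's lemma (one step of the pair of mutually inverse translations). -/
lemma key_lemma {T : Subsemigroup S} {s s' : WithOne S}
    (hs : s ∈ T1 T) (hs' : s' ∈ T1 T) {a0 a1 x : S}
    (h01 : (a0 : WithOne S) * s = (a1 : WithOne S))
    (h10 : (a1 : WithOne S) * s' = (a0 : WithOne S))
    (hx : lset T x = lset T a0) :
    ∃ x1 : S, (x : WithOne S) * s = (x1 : WithOne S) ∧
      lset T x1 = lset T a1 ∧ rset T x1 = rset T x ∧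
      (x1 : WithOne S) * s' = (x : WithOne S) := by
  have hxa : x ∈ lset T a0 := hx ▸ self_mem_lset T x
  obtain ⟨v, hv, hxv⟩ := mem_lset_iff.mp hxa
  have hax : a0 ∈ lset T x := hx.symm ▸ self_mem_lset T a0
  obtain ⟨v', hv', hav⟩ := mem_lset_iff.mp hax
  -- v * ↑a1 is a coe
  have : ∃ x1 : S, v * (a1 : WithOne S) = (x1 : WithOne S) := by
    rcases hv with rfl | ⟨t, ht, rfl⟩
    · exact ⟨a1, one_mul _⟩
    · exact ⟨t * a1, rfl⟩
  obtain ⟨x1, hx1⟩ := this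
  have hxs : (x : WithOne S) * s = (x1 : WithOne S) := by
    rw [hxv, mul_assoc, h01, hx1]
  have hx1s : (x1 : WithOne S) * s' = (x : WithOne S) := by
    rw [← hx1, mul_assoc, h10, ← hxv]
  have ha1x1 : (a1 : WithOne S) = v' * (x1 : WithOne S) := by
    rw [← h01, hav, mul_assoc, hxs]
  refine ⟨x1, hxs, ?_, ?_, hx1s⟩
  · exact le_antisymm (lset_subset hv hx1.symm) (lset_subset hv' ha1x1)
  · exact le_antisymm (rset_subset hs hxs.symm) (rset_subset hs' hx1s.symm)

lemma stab_subset_of_Lrel (T : Subsemigroup S) (H H' : Set S)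
    (hH : IsHClassIn T H) (hH' : IsHClassIn T H')
    (hL : ∃ a ∈ H, ∃ b ∈ H', LrelT T a b) :
    stabSet T H ⊆ stabSet T H' := by
  obtain ⟨a0, ha0, b0, hb0, hab⟩ := hL
  obtain ⟨a, rfl⟩ := hH
  obtain ⟨b, rfl⟩ := hH'
  rintro s ⟨hsT, hsH⟩
  -- produce a1 ∈ H with ↑a0 * s = ↑a1
  have h1 : (a0 : WithOne S) * s ∈ setMulR {x | HrelT T a x} s := ⟨a0, ha0, rfl⟩
  rw [hsH] at h1
  obtain ⟨a1, ha1, h01⟩ := h1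
  replace h01 : (a0 : WithOne S) * s = (a1 : WithOne S) := h01.symm
  -- produce s' ∈ T¹ with ↑a1 * s' = ↑a0
  have hra : rset T a1 = rset T a0 := (ha1.1).symm.trans ha0.1
  have ha0r : a0 ∈ rset T a1 := hra ▸ self_mem_rset T a0
  obtain ⟨s', hs', h10⟩ := mem_rset_iff.mp ha0r
  replace h10 : (a1 : WithOne S) * s' = (a0 : WithOne S) := h10.symm
  -- L-class bookkeeping
  have hlba : lset T b = lset T a0 := (hb0.2.trans hab.symm)
  have hla01 : lset T a0 = lset T a1 := (ha0.2.symm.trans ha1.2)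
  refine ⟨hsT, ?_⟩
  ext z
  constructor
  · rintro ⟨x, hx, rfl⟩
    have hlx : lset T x = lset T a0 := hx.2.symm.trans hlba
    obtain ⟨x1, hxs, hl1, hr1, _⟩ := key_lemma hsT hs' h01 h10 hlx
    exact ⟨x1, ⟨hx.1.trans hr1.symm, hlba.trans (hla01.trans hl1.symm)⟩, hxs.symm⟩
  · rintro ⟨k, hk, rfl⟩
    have hlk : lset T k = lset T a1 := (hk.2.symm.trans hlba).trans hla01
    obtain ⟨k1, hks', hl1, hr1, hk1s⟩ := key_lemma hs' hsT h10 h01 hlk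
    exact ⟨k1, ⟨hk.1.trans hr1.symm, hlba.trans hl1.symm⟩, hk1s.symm⟩

end Aux

lemma gamma_step {T : Subsemigroup S} {a0 h' : S} {x y : WithOne S}
    (hl : lset T h' = lset T a0)
    (h : (a0 : WithOne S) * x = (a0 : WithOne S) * y) :
    (h' : WithOne S) * x = (h' : WithOne S) * y := by
  obtain ⟨v, hv, he⟩ := mem_lset_iff.mp (hl ▸ self_mem_lset T h')
  rw [he, mul_assoc, mul_assoc, h]

end GreenIndexPaper

open GreenIndexPaper

/-- `ℋ^T`-classes in the same `ℒ^T`-class have equal stabilizers and equal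
Schützenberger congruences. -/
theorem stab_and_gamma_eq_of_Lrel
    {S : Type*} [Semigroup S] (T : Subsemigroup S) (H H' : Set S)
    (hH : IsHClassIn T H) (hH' : IsHClassIn T H')
    (hL : ∃ a ∈ H, ∃ b ∈ H', LrelT T a b) :
    stabSet T H = stabSet T H' ∧
    ∀ x ∈ stabSet T H, ∀ y ∈ stabSet T H,
      ((∀ h ∈ H, (h : WithOne S) * x = (h : WithOne S) * y) ↔
       (∀ h ∈ H', (h : WithOne S) * x = (h : WithOne S) * y)) := by
  have h1 := stab_subset_of_Lrel T H H' hH hH' hL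
  obtain ⟨a0, ha0, b0, hb0, hab⟩ := hL
  have h2 := stab_subset_of_Lrel T H' H hH' hH ⟨b0, hb0, a0, ha0, hab.symm⟩
  obtain ⟨a, rfl⟩ := hH
  obtain ⟨b, rfl⟩ := hH'
  refine ⟨Set.Subset.antisymm h1 h2, ?_⟩
  intro x _ y _
  constructor
  · intro hxy h' hh'
    have hl : lset T h' = lset T a0 :=
      hh'.2.symm.trans (hb0.2.trans hab.symm)
    exact gamma_step hl (hxy a0 ha0)
  · intro hxy h hh
    have hl : lset T h = lset T b0 :=
      hh.2.symm.trans (ha0.2.trans hab)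
    exact gamma_step hl (hxy b0 hb0)
end

section
/- Let S be a semigroup, T a subsemigroup of S, and let H and H' be T-relative ℋ-classes of S contained in the same ℛ^T-class of S. Then the relative Schützenberger groups Γ(H) and Γ(H') are isomorphic, i.e. there is a multiplicative isomorphism between the quotient monoids Stab(H)/γ(H) and Stab(H')/γ(H'). -/
open GreenIndexPaper
section SchAux

variable {S : Type*} [Semigroup S]

theorem aux_mem_rset_self (T : Subsemigroup S) (u : S) : u ∈ rset T u := Set.mem_insert _ _

theorem aux_mem_lset_self (T : Subsemigroup S) (u : S) : u ∈ lset T u := Set.mem_insert _ _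

theorem aux_rset_subset {T : Subsemigroup S} {u v : S} (h : v ∈ rset T u) :
    rset T v ⊆ rset T u := by
  intro x hx
  rcases Set.mem_insert_iff.mp hx with rfl | ⟨s, hs, rfl⟩
  · exact h
  · rcases Set.mem_insert_iff.mp h with rfl | ⟨t, ht, rfl⟩
    · exact Set.mem_insert_iff.mpr (Or.inr ⟨s, hs, rfl⟩)
    · exact Set.mem_insert_iff.mpr (Or.inr ⟨t * s, T.mul_mem ht hs, mul_assoc u t s⟩)

theorem aux_lset_subset {T : Subsemigroup S} {u v : S} (h : v ∈ lset T u) :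
    lset T v ⊆ lset T u := by
  intro x hx
  rcases Set.mem_insert_iff.mp hx with rfl | ⟨s, hs, rfl⟩
  · exact h
  · rcases Set.mem_insert_iff.mp h with rfl | ⟨t, ht, rfl⟩
    · exact Set.mem_insert_iff.mpr (Or.inr ⟨s, hs, rfl⟩)
    · exact Set.mem_insert_iff.mpr (Or.inr ⟨s * t, T.mul_mem hs ht, (mul_assoc s t u).symm⟩)

theorem aux_rrel_of_mem {T : Subsemigroup S} {u v : S} (h1 : v ∈ rset T u) (h2 : u ∈ rset T v) :
    RrelT T u v := Set.Subset.antisymm (aux_rset_subset h2) (aux_rset_subset h1)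

theorem aux_lrel_of_mem {T : Subsemigroup S} {u v : S} (h1 : v ∈ lset T u) (h2 : u ∈ lset T v) :
    LrelT T u v := Set.Subset.antisymm (aux_lset_subset h2) (aux_lset_subset h1)

theorem aux_fix {T : Subsemigroup S} {a b p q : S} (hab : a * p = b) (hba : b * q = a) :
    ∀ y ∈ lset T a, y * (p * q) = y := by
  have ha : a * (p * q) = a := by rw [← mul_assoc, hab, hba]
  intro y hy
  rcases Set.mem_insert_iff.mp hy with rfl | ⟨t, ht, rfl⟩
  · exact ha
  · rw [mul_assoc, ha]

theorem aux_hrel_mul {T : Subsemigroup S} {a b p q : S} (hp : p ∈ T) (hq : q ∈ T)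
    (hab : a * p = b) (hba : b * q = a) (hrel : RrelT T a b) :
    ∀ x, HrelT T a x → HrelT T b (x * p) := by
  intro x hx
  have hxla : x ∈ lset T a := by rw [hx.2]; exact aux_mem_lset_self T x
  constructor
  · apply aux_rrel_of_mem
    · -- x * p ∈ rset T b
      have hxb : x ∈ rset T b := by rw [← hrel, hx.1]; exact aux_mem_rset_self T x
      rcases Set.mem_insert_iff.mp hxb with rfl | ⟨t, ht, rfl⟩
      · exact Set.mem_insert_iff.mpr (Or.inr ⟨p, hp, rfl⟩)
      · exact Set.mem_insert_iff.mpr (Or.inr ⟨t * p, T.mul_mem ht hp, mul_assoc b t p⟩)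
    · -- b ∈ rset T (x * p)
      have harx : a ∈ rset T x := by rw [← hx.1]; exact aux_mem_rset_self T a
      rcases Set.mem_insert_iff.mp harx with rfl | ⟨s, hs, hxs⟩
      · rw [← hab]; exact aux_mem_rset_self T (a * p)
      · have e : x * p * (q * (s * p)) = b := by
          rw [← hab, hxs]
          calc x * p * (q * (s * p)) = x * (p * q) * (s * p) := by simp only [mul_assoc]
            _ = x * (s * p) := by rw [aux_fix hab hba x hxla]
            _ = x * s * p := (mul_assoc x s p).symm
        exact Set.mem_insert_iff.mpr
          (Or.inr ⟨q * (s * p), T.mul_mem hq (T.mul_mem hs hp), e.symm⟩)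
  · apply aux_lrel_of_mem
    · -- x * p ∈ lset T b
      rcases Set.mem_insert_iff.mp hxla with rfl | ⟨t, ht, rfl⟩
      · rw [hab]; exact aux_mem_lset_self T b
      · exact Set.mem_insert_iff.mpr (Or.inr ⟨t, ht, by rw [mul_assoc, hab]⟩)
    · -- b ∈ lset T (x * p)
      have halx : a ∈ lset T x := by rw [← hx.2]; exact aux_mem_lset_self T a
      rcases Set.mem_insert_iff.mp halx with rfl | ⟨t, ht, hxa⟩
      · rw [← hab]; exact aux_mem_lset_self T (a * p)
      · exact Set.mem_insert_iff.mpr (Or.inr ⟨t, ht, by rw [← hab, hxa, mul_assoc]⟩)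

theorem aux_coe_fix {T : Subsemigroup S} {a b p q : S} (hab : a * p = b) (hba : b * q = a)
    {g : S} (hg : HrelT T a g) :
    (g : WithOne S) * ((p : WithOne S) * (q : WithOne S)) = (g : WithOne S) := by
  have hgl : g ∈ lset T a := by rw [hg.2]; exact aux_mem_lset_self T g
  rw [← WithOne.coe_mul, ← WithOne.coe_mul, aux_fix hab hba g hgl]

theorem aux_key {T : Subsemigroup S} {a b p q : S} (hab : a * p = b) (hba : b * q = a)
    {t : WithOne S} (ht : t ∈ stabSet T {x | HrelT T a x}) :
    ∀ h : S, HrelT T a h →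
      (h : WithOne S) * t * ((p : WithOne S) * (q : WithOne S)) = (h : WithOne S) * t := by
  intro h hh
  obtain ⟨_, htH⟩ := ht
  have hmem : (h : WithOne S) * t ∈ setMulR {x | HrelT T a x} t := ⟨h, hh, rfl⟩
  rw [htH] at hmem
  obtain ⟨g, hg, hge⟩ := hmem
  rw [← hge]
  exact aux_coe_fix hab hba hg

theorem aux_stab_mem {T : Subsemigroup S} {a b p q : S} (hp : p ∈ T) (hq : q ∈ T)
    (hab : a * p = b) (hba : b * q = a) (hrel : RrelT T a b) {t : WithOne S}
    (ht : t ∈ stabSet T {x | HrelT T a x}) :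
    (q : WithOne S) * t * (p : WithOne S) ∈ stabSet T {x | HrelT T b x} := by
  have hrel' : RrelT T b a := (hrel : rset T a = rset T b).symm
  have mapsP := aux_hrel_mul hp hq hab hba hrel
  have mapsQ := aux_hrel_mul hq hp hba hab hrel'
  obtain ⟨htT, htH⟩ := ht
  constructor
  · rcases Set.mem_insert_iff.mp htT with rfl | ⟨t', ht', rfl⟩
    · exact Set.mem_insert_iff.mpr
        (Or.inr ⟨q * p, T.mul_mem hq hp, by rw [WithOne.coe_mul, mul_one]⟩)
    · exact Set.mem_insert_iff.mpr
        (Or.inr ⟨q * t' * p, T.mul_mem (T.mul_mem hq ht') hp,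
          by rw [WithOne.coe_mul, WithOne.coe_mul]⟩)
  · ext x
    constructor
    · rintro ⟨h', hh', rfl⟩
      have h2 : (↑(h' * q) : WithOne S) * t ∈ setMulR {x | HrelT T a x} t :=
        ⟨h' * q, mapsQ h' hh', rfl⟩
      rw [htH] at h2
      obtain ⟨g, hg, hge⟩ := h2
      refine ⟨g * p, mapsP g hg, ?_⟩
      rw [WithOne.coe_mul, hge, WithOne.coe_mul]
      simp only [mul_assoc]
    · rintro ⟨y, hy, rfl⟩
      have hylb : y ∈ lset T b := by rw [hy.2]; exact aux_mem_lset_self T y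
      have h2 : (↑(y * q) : WithOne S) ∈ ((↑) : S → WithOne S) '' {x | HrelT T a x} :=
        ⟨y * q, mapsQ y hy, rfl⟩
      rw [← htH] at h2
      obtain ⟨x0, hx0, he⟩ := h2
      refine ⟨x0 * p, mapsP x0 hx0, ?_⟩
      symm
      calc (↑(x0 * p) : WithOne S) * ((q : WithOne S) * t * (p : WithOne S))
          = (x0 : WithOne S) * ((p : WithOne S) * (q : WithOne S)) * (t * (p : WithOne S)) := by
            rw [WithOne.coe_mul]; simp only [mul_assoc]
        _ = (x0 : WithOne S) * (t * (p : WithOne S)) := by rw [aux_coe_fix hab hba hx0]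
        _ = ((x0 : WithOne S) * t) * (p : WithOne S) := (mul_assoc _ _ _).symm
        _ = (↑(y * q) : WithOne S) * (p : WithOne S) := by rw [he]
        _ = (y : WithOne S) := by
            rw [← WithOne.coe_mul, mul_assoc, aux_fix hba hab y hylb]

theorem aux_resp {T : Subsemigroup S} {a b p q : S} (hp : p ∈ T) (hq : q ∈ T)
    (hab : a * p = b) (hba : b * q = a) (hrel : RrelT T a b) {s t : WithOne S}
    (hst : ∀ h : S, HrelT T a h → (h : WithOne S) * s = (h : WithOne S) * t) :
    ∀ h' : S, HrelT T b h' →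
      (h' : WithOne S) * ((q : WithOne S) * s * (p : WithOne S)) =
      (h' : WithOne S) * ((q : WithOne S) * t * (p : WithOne S)) := by
  have hrel' : RrelT T b a := (hrel : rset T a = rset T b).symm
  have mapsQ := aux_hrel_mul hq hp hba hab hrel'
  intro h' hh'
  have h1 := hst (h' * q) (mapsQ h' hh')
  calc (h' : WithOne S) * ((q : WithOne S) * s * (p : WithOne S))
      = (↑(h' * q) : WithOne S) * s * (p : WithOne S) := by
        rw [WithOne.coe_mul]; simp only [mul_assoc]
    _ = (↑(h' * q) : WithOne S) * t * (p : WithOne S) := by rw [h1]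
    _ = (h' : WithOne S) * ((q : WithOne S) * t * (p : WithOne S)) := by
        rw [WithOne.coe_mul]; simp only [mul_assoc]

end SchAux
/-- `ℋ^T`-classes in the same `ℛ^T`-class have isomorphic Schützenberger
groups. -/
theorem schGroup_iso_of_Rrel
    {S : Type*} [Semigroup S] (T : Subsemigroup S) (H H' : Set S)
    (hH : IsHClassIn T H) (hH' : IsHClassIn T H')
    (hR : ∃ a ∈ H, ∃ b ∈ H', RrelT T a b) :
    Nonempty (SchGroup T H ≃* SchGroup T H') := by
  obtain ⟨a, haH, b, hbH', hrel0⟩ := hR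
  obtain ⟨a₀, rfl⟩ := hH
  obtain ⟨b₀, rfl⟩ := hH'
  have hHa : {x | HrelT T a₀ x} = {x | HrelT T a x} := by
    ext x
    exact ⟨fun hx => ⟨Eq.trans (Eq.symm haH.1) hx.1, Eq.trans (Eq.symm haH.2) hx.2⟩,
      fun hx => ⟨Eq.trans haH.1 hx.1, Eq.trans haH.2 hx.2⟩⟩
  have hHb : {x | HrelT T b₀ x} = {x | HrelT T b x} := by
    ext x
    exact ⟨fun hx => ⟨Eq.trans (Eq.symm hbH'.1) hx.1, Eq.trans (Eq.symm hbH'.2) hx.2⟩,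
      fun hx => ⟨Eq.trans hbH'.1 hx.1, Eq.trans hbH'.2 hx.2⟩⟩
  rw [hHa, hHb]
  by_cases hab0 : b = a
  · subst hab0
    exact ⟨MulEquiv.refl _⟩
  · have hbmem : b ∈ rset T a := by rw [hrel0]; exact aux_mem_rset_self T b
    rcases Set.mem_insert_iff.mp hbmem with h | ⟨p, hp, hbp⟩
    · exact absurd h hab0
    have hamem : a ∈ rset T b := by rw [← hrel0]; exact aux_mem_rset_self T a
    rcases Set.mem_insert_iff.mp hamem with h | ⟨q, hq, haq⟩
    · exact absurd h.symm hab0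
    have hab : a * p = b := hbp.symm
    have hba : b * q = a := haq.symm
    have hrel' : RrelT T b a := (hrel0 : rset T a = rset T b).symm
    have mapsQ := aux_hrel_mul hq hp hba hab hrel'
    refine ⟨⟨⟨Quotient.map'
        (fun t : stabSubmonoid T {x | HrelT T a x} =>
          (⟨(q : WithOne S) * ↑t * (p : WithOne S),
            aux_stab_mem hp hq hab hba hrel0 t.2⟩ : stabSubmonoid T {x | HrelT T b x}))
        (fun s t hst => aux_resp hp hq hab hba hrel0 (fun h hh => hst h hh)),
      Quotient.map'
        (fun t : stabSubmonoid T {x | HrelT T b x} =>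
          (⟨(p : WithOne S) * ↑t * (q : WithOne S),
            aux_stab_mem hq hp hba hab hrel' t.2⟩ : stabSubmonoid T {x | HrelT T a x}))
        (fun s t hst => aux_resp hq hp hba hab hrel' (fun h hh => hst h hh)), ?_, ?_⟩, ?_⟩⟩
    · -- left inverse
      intro x
      refine Quotient.inductionOn' x fun t => ?_
      apply Quotient.sound'
      intro h hh
      calc (h : WithOne S) * ((p : WithOne S) * ((q : WithOne S) * ↑t * (p : WithOne S)) * (q : WithOne S))
          = ((h : WithOne S) * ((p : WithOne S) * (q : WithOne S))) * ↑t
              * ((p : WithOne S) * (q : WithOne S)) := by simp only [mul_assoc]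
        _ = (h : WithOne S) * ↑t * ((p : WithOne S) * (q : WithOne S)) := by
            rw [aux_coe_fix hab hba hh]
        _ = (h : WithOne S) * ↑t := aux_key hab hba t.2 h hh
    · -- right inverse
      intro x
      refine Quotient.inductionOn' x fun t => ?_
      apply Quotient.sound'
      intro h hh
      calc (h : WithOne S) * ((q : WithOne S) * ((p : WithOne S) * ↑t * (q : WithOne S)) * (p : WithOne S))
          = ((h : WithOne S) * ((q : WithOne S) * (p : WithOne S))) * ↑t
              * ((q : WithOne S) * (p : WithOne S)) := by simp only [mul_assoc]
        _ = (h : WithOne S) * ↑t * ((q : WithOne S) * (p : WithOne S)) := by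
            rw [aux_coe_fix hba hab hh]
        _ = (h : WithOne S) * ↑t := aux_key hba hab t.2 h hh
    · -- map_mul
      intro x y
      refine Quotient.inductionOn₂' x y fun s t => ?_
      refine Quotient.sound' fun h' hh' => ?_
      have h1 : HrelT T a (h' * q) := mapsQ h' hh'
      have e := aux_key hab hba s.2 (h' * q) h1
      calc (h' : WithOne S) * ((q : WithOne S) * (↑s * ↑t) * (p : WithOne S))
          = ((↑(h' * q) : WithOne S) * ↑s) * (↑t * (p : WithOne S)) := by
            rw [WithOne.coe_mul]; simp only [mul_assoc]
        _ = ((↑(h' * q) : WithOne S) * ↑s * ((p : WithOne S) * (q : WithOne S)))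
              * (↑t * (p : WithOne S)) := by rw [e]
        _ = (h' : WithOne S) * (((q : WithOne S) * ↑s * (p : WithOne S))
              * ((q : WithOne S) * ↑t * (p : WithOne S))) := by
            rw [WithOne.coe_mul]; simp only [mul_assoc]
end

section
/- Let S be a semigroup and T a subsemigroup of S. If B ⊆ T is a generating set for T and C = {h_i : i ∈ I} is a set of representatives of the ℋ^T-classes contained in S \ T (one representative from each class), then B ∪ C generates S. In particular, if T is finitely generated and T has finite Green index in S, then S is finitely generated. -/
open GreenIndexPaper

theorem aux_closure_top {S : Type*} [Semigroup S] (T : Subsemigroup S) (B C : Set S)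
    (hBgen : Subsemigroup.closure B = T)
    (hC2 : ∀ s : S, s ∉ T → ∃ c ∈ C, HrelT T s c) :
    Subsemigroup.closure (B ∪ C) = ⊤ := by
  rw [eq_top_iff]
  intro s _
  have hB : T ≤ Subsemigroup.closure (B ∪ C) := by
    rw [← hBgen]; exact Subsemigroup.closure_mono Set.subset_union_left
  by_cases hs : s ∈ T
  · exact hB hs
  · obtain ⟨c, hcC, hR, _⟩ := hC2 s hs
    have hccl : c ∈ Subsemigroup.closure (B ∪ C) :=
      Subsemigroup.subset_closure (Or.inr hcC)
    have hmem : s ∈ rset T c := by rw [← hR]; exact Set.mem_insert _ _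
    rcases hmem with rfl | ⟨t, ht, rfl⟩
    · exact hccl
    · exact Subsemigroup.mul_mem _ hccl (hB ht)

/-- a generating set for `T` together with a transversal of the `ℋ^T`-classes
of `S \\ T` generates `S`; in particular finite generation passes from `T` to `S` when the
Green index is finite. -/
theorem generators_from_subsemigroup
    {S : Type*} [Semigroup S] (T : Subsemigroup S) (B C : Set S)
    (hBT : B ⊆ (T : Set S)) (hBgen : Subsemigroup.closure B = T)
    (hC1 : ∀ c ∈ C, c ∉ T)
    (hC2 : ∀ s : S, s ∉ T → ∃ c ∈ C, HrelT T s c)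
    (hC3 : ∀ c ∈ C, ∀ c' ∈ C, HrelT T c c' → c = c') :
    Subsemigroup.closure (B ∪ C) = ⊤ ∧
    ((∃ B' : Finset S, (↑B' : Set S) ⊆ (T : Set S) ∧ Subsemigroup.closure (↑B' : Set S) = T) →
      FiniteGreenIndex T →
      ∃ A : Finset S, Subsemigroup.closure (↑A : Set S) = (⊤ : Subsemigroup S)) := by
  constructor
  · exact aux_closure_top T B C hBgen hC2
  · rintro ⟨B', hB'T, hB'gen⟩ ⟨F, hF1, hF2⟩
    classical
    refine ⟨B' ∪ F, ?_⟩
    rw [Finset.coe_union]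
    exact aux_closure_top T _ _ hB'gen hF2
end

section
/- Let S be a semigroup generated by a subset A ⊆ S, let T be a subsemigroup of S, fix a transversal {h_i : i ∈ I} of the ℋ^T-classes contained in S \ T with the convention h_1 = 1 ∈ S^1 and I^1 = I ∪ {1}, and fix functions ρ, λ : (indices) and σ : S^1 × I^1 → T^1, τ : I^1 × S^1 → T^1 satisfying s h_i = h_{ρ(s,i)} σ(s,i) and h_i s = τ(i,s) h_{λ(i,s)} for all s ∈ S^1, i ∈ I^1 (where ρ(s,i) = j if s h_i ∈ H_j and ρ(s,i) = 1 if s h_i ∈ T^1, and dually for λ). Then T is generated by the set B = {τ(i, σ(a,j)) : i, j ∈ I^1, a ∈ A} ∩ T, i.e. every element of T is a product of elements of this set. In particular, if S is finitely generated and T has finite Green index in S, then T is finitely generated. -/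
open GreenIndexPaper

/-!
Write `t ∈ T` as a product `a₁ ⋯ aₙ` of generators. Sweeping from right to left with `ρ, σ`
gives `t = h_k σ₁ ⋯ σₙ` with every `σₗ = σ(aₗ, jₗ) ∈ T¹`; sweeping this from left to right with
`λ, τ` gives `t = τ(i₁, σ₁) ⋯ τ(iₙ, σₙ) h_m`. Along the second sweep the prefix
`h_k σ₁ ⋯ σₗ` stays `ℒ^T`-related to the current representative (or lies in `T¹` when the index
is `1`), because `ℒ^T` is a right congruence. The full product `t` lies in `T`, and an element
`ℒ^T`-related to some `h_m ∉ T` cannot, so the last index is `1` and `t` is a product of the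
`τ(i, σ(a, j))`. When `S \ T` has finitely many `ℋ^T`-classes there are finitely many indices,
so this generating set is finite whenever `A` is.
-/

namespace GreenIndexPaper

@[simp]
theorem repOne_none {S ι : Type*} (h : ι → S) : repOne h none = 1 := rfl

variable {S : Type*} {ι : Type*} [Semigroup S] {T : Subsemigroup S}

theorem one_mem_T1 : (1 : WithOne S) ∈ T1 T := Set.mem_insert _ _

@[simp]
theorem coe_mem_T1 {x : S} : (x : WithOne S) ∈ T1 T ↔ x ∈ T := by
  simp [T1]

theorem mul_mem_T1 {a b : WithOne S} (ha : a ∈ T1 T) (hb : b ∈ T1 T) : a * b ∈ T1 T := by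
  rcases ha with rfl | ⟨s, hs, rfl⟩
  · rwa [one_mul]
  rcases hb with rfl | ⟨t, ht, rfl⟩
  · rw [mul_one, coe_mem_T1]; exact hs
  rw [← WithOne.coe_mul, coe_mem_T1]
  exact T.mul_mem hs ht

def T1Submonoid (T : Subsemigroup S) : Submonoid (WithOne S) where
  carrier := T1 T
  one_mem' := one_mem_T1
  mul_mem' := mul_mem_T1

def leftT1 (T : Subsemigroup S) (v : WithOne S) : Set (WithOne S) := {x | ∃ w ∈ T1 T, x = w * v}

theorem mem_leftT1_self (v : WithOne S) : v ∈ leftT1 T v := ⟨1, one_mem_T1, (one_mul v).symm⟩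

theorem leftT1_subset_T1 {v : WithOne S} (hv : v ∈ T1 T) : leftT1 T v ⊆ T1 T := by
  rintro _ ⟨w, hw, rfl⟩
  exact mul_mem_T1 hw hv

theorem leftT1_mul (v s : WithOne S) : leftT1 T (v * s) = (· * s) '' leftT1 T v := by
  ext x
  simp [leftT1, mul_assoc, eq_comm]

theorem leftT1_coe (y : S) : leftT1 T y = (↑) '' lset T y := by
  ext x
  simp [leftT1, lset, T1, or_and_right, exists_or, eq_comm]

theorem LrelT.leftT1_eq {y z : S} (hyz : LrelT T y z) : leftT1 T y = leftT1 T z := by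
  rw [leftT1_coe, leftT1_coe, hyz]

theorem exists_mul_eq_mul_of_mem_closure {κ : Type*} {A : Set S} {r : κ → WithOne S}
    {ρ : WithOne S → κ → κ} {σ : WithOne S → κ → WithOne S}
    (hρ : ∀ s i, s * r i = r (ρ s i) * σ s i) {s : S} (hs : s ∈ Subsemigroup.closure A)
    (j : κ) : ∃ k, ∃ x ∈ Submonoid.closure {y | ∃ a ∈ A, ∃ i, y = σ (a : WithOne S) i},
      (s : WithOne S) * r j = r k * x := by
  induction hs using Subsemigroup.closure_induction generalizing j with
  | mem a ha => exact ⟨ρ a j, σ a j, Submonoid.subset_closure ⟨a, ha, j, rfl⟩, hρ _ _⟩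
  | mul s₁ s₂ _ _ ih₁ ih₂ =>
    obtain ⟨k₂, x₂, hx₂, e₂⟩ := ih₂ j
    obtain ⟨k₁, x₁, hx₁, e₁⟩ := ih₁ k₂
    refine ⟨k₁, x₁ * x₂, Submonoid.mul_mem _ hx₁ hx₂, ?_⟩
    rw [WithOne.coe_mul, mul_assoc, e₂, ← mul_assoc, e₁, mul_assoc]

/-- The index `none` stands for `1 ∈ I¹`, whose "class" is all of `T¹`. -/
def InLClass (T : Subsemigroup S) (h : ι → S) : Option ι → WithOne S → Prop
  | none, x => x ∈ T1 T
  | some m, x => leftT1 T x = leftT1 T (h m)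

section Sweeps

variable {h : ι → S}

theorem inLClass_repOne (j : Option ι) : InLClass T h j (repOne h j) := by
  cases j
  · exact one_mem_T1
  · rfl

theorem InLClass.eq_none (hrep : ∀ i, h i ∉ T) {j : Option ι} {t : S} (ht : t ∈ T)
    (hj : InLClass T h j t) : j = none := by
  cases j with
  | none => rfl
  | some m =>
    have hm : ((h m : S) : WithOne S) ∈ leftT1 T t := hj ▸ mem_leftT1_self _
    exact absurd (coe_mem_T1.mp (leftT1_subset_T1 (coe_mem_T1.mpr ht) hm)) (hrep m)

theorem InLClass.mul {lam : Option ι → WithOne S → Option ι}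
    (hlamnone : ∀ i s, lam i s = none → repOne h i * s ∈ T1 T)
    (hlamsome : ∀ i s j, lam i s = some j →
        ∃ x : S, (x : WithOne S) = repOne h i * s ∧ x ∉ T ∧ LrelT T x (h j))
    {j : Option ι} {x s : WithOne S} (hx : InLClass T h j x) (hs : s ∈ T1 T) :
    InLClass T h (lam j s) (x * s) := by
  cases j with
  | none =>
    cases hl : lam none s with
    | none => exact mul_mem_T1 hx hs
    | some p =>
      obtain ⟨z, hz, hzT, -⟩ := hlamsome none s p hl
      rw [repOne_none, one_mul] at hz
      exact absurd (coe_mem_T1.mp (hz ▸ hs)) hzT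
  | some m =>
    have hxs : leftT1 T (x * s) = leftT1 T ((h m : WithOne S) * s) := by
      rw [leftT1_mul, leftT1_mul, show leftT1 T x = _ from hx]
    cases hl : lam (some m) s with
    | none => exact leftT1_subset_T1 (hlamnone _ s hl) (hxs ▸ mem_leftT1_self _)
    | some p =>
      obtain ⟨z, hz, -, hzp⟩ := hlamsome (some m) s p hl
      exact hxs.trans (hz ▸ hzp.leftT1_eq)

theorem exists_repOne_mul_eq_mul_repOne {lam : Option ι → WithOne S → Option ι}
    {τ : Option ι → WithOne S → WithOne S}
    (hlameq : ∀ i s, repOne h i * s = τ i s * repOne h (lam i s))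
    (hlamnone : ∀ i s, lam i s = none → repOne h i * s ∈ T1 T)
    (hlamsome : ∀ i s j, lam i s = some j →
        ∃ x : S, (x : WithOne S) = repOne h i * s ∧ x ∉ T ∧ LrelT T x (h j))
    {M : Submonoid (WithOne S)} {Y : Set (WithOne S)} (hY : Y ⊆ T1 T)
    (hτY : ∀ i, ∀ y ∈ Y, τ i y ∈ M) {x : WithOne S} (hx : x ∈ Submonoid.closure Y)
    (i : Option ι) {v : WithOne S} (hv : InLClass T h i v) :
    ∃ k, ∃ u ∈ M, repOne h i * x = u * repOne h k ∧ InLClass T h k (v * x) := by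
  induction hx using Submonoid.closure_induction generalizing i v with
  | mem y hy => exact ⟨lam i y, τ i y, hτY i y hy, hlameq i y, hv.mul hlamnone hlamsome (hY hy)⟩
  | one => exact ⟨i, 1, M.one_mem, by rw [mul_one, one_mul], by rwa [mul_one]⟩
  | mul x₁ x₂ _ _ ih₁ ih₂ =>
    obtain ⟨k₁, u₁, hu₁, e₁, hv₁⟩ := ih₁ i hv
    obtain ⟨k₂, u₂, hu₂, e₂, hv₂⟩ := ih₂ k₁ hv₁
    refine ⟨k₂, u₁ * u₂, M.mul_mem hu₁ hu₂, ?_, by rwa [← mul_assoc]⟩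
    rw [← mul_assoc, e₁, mul_assoc, e₂, mul_assoc]

end Sweeps

def schreierGenerators (T : Subsemigroup S) (A : Set S) (σ : WithOne S → Option ι → WithOne S)
    (τ : Option ι → WithOne S → WithOne S) : Set S :=
  {x : S | x ∈ T ∧ ∃ (i j : Option ι) (a : S), a ∈ A ∧
    (x : WithOne S) = τ i (σ (a : WithOne S) j)}

theorem schreierGenerators_subset (A : Set S) (σ : WithOne S → Option ι → WithOne S)
    (τ : Option ι → WithOne S → WithOne S) : schreierGenerators T A σ τ ⊆ T :=
  fun _ hx => hx.1

theorem closure_schreierGenerators_eq {A : Set S} (hA : Subsemigroup.closure A = ⊤)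
    {h : ι → S} (hrep : ∀ i, h i ∉ T)
    {ρ : WithOne S → Option ι → Option ι} {σ : WithOne S → Option ι → WithOne S}
    {lam : Option ι → WithOne S → Option ι} {τ : Option ι → WithOne S → WithOne S}
    (hσT : ∀ s i, σ s i ∈ T1 T) (hτT : ∀ i s, τ i s ∈ T1 T)
    (hρeq : ∀ s i, s * repOne h i = repOne h (ρ s i) * σ s i)
    (hlameq : ∀ i s, repOne h i * s = τ i s * repOne h (lam i s))
    (hlamnone : ∀ i s, lam i s = none → repOne h i * s ∈ T1 T)
    (hlamsome : ∀ i s j, lam i s = some j →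
        ∃ x : S, (x : WithOne S) = repOne h i * s ∧ x ∉ T ∧ HrelT T x (h j)) :
    Subsemigroup.closure (schreierGenerators T A σ τ) = T := by
  set M := T1Submonoid (Subsemigroup.closure (schreierGenerators T A σ τ))
  refine le_antisymm (Subsemigroup.closure_le.mpr (schreierGenerators_subset A σ τ)) fun t ht => ?_
  obtain ⟨k, x, hx, htx⟩ := exists_mul_eq_mul_of_mem_closure hρeq (hA ▸ Subsemigroup.mem_top t) none
  rw [repOne_none, mul_one] at htx
  have hτM : ∀ i, ∀ y ∈ {y | ∃ a ∈ A, ∃ j, y = σ (a : WithOne S) j}, τ i y ∈ M := by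
    rintro i _ ⟨a, ha, j, rfl⟩
    rcases hτT i (σ a j) with h1 | ⟨b, hb, hbτ⟩
    · exact h1 ▸ M.one_mem
    · exact hbτ ▸ coe_mem_T1.mpr (Subsemigroup.subset_closure ⟨hb, i, j, a, ha, hbτ⟩)
  obtain ⟨m, u, hu, hxu, hm⟩ := exists_repOne_mul_eq_mul_repOne hlameq hlamnone
    (fun i s j hl => (hlamsome i s j hl).imp fun _ ⟨hx, hxT, hxh⟩ => ⟨hx, hxT, hxh.2⟩)
    (by rintro _ ⟨a, -, j, rfl⟩; exact hσT _ _) hτM hx k (inLClass_repOne k)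
  rw [← htx] at hm hxu
  obtain rfl := hm.eq_none hrep ht
  rw [repOne_none, mul_one] at hxu
  exact coe_mem_T1.mp (hxu ▸ hu)

theorem finite_of_finiteGreenIndex {h : ι → S} (hrep : ∀ i, h i ∉ T)
    (hdistinct : ∀ i j, HrelT T (h i) (h j) → i = j) (hT : FiniteGreenIndex T) : Finite ι := by
  obtain ⟨F, -, hF⟩ := hT
  choose f hfF hf using fun i => hF (h i) (hrep i)
  refine Finite.of_injective (fun i => (⟨f i, hfF i⟩ : F)) fun i j hij => hdistinct i j ?_
  have hfij : f i = f j := congrArg Subtype.val hij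
  exact ⟨(hf i).1.trans (hfij ▸ (hf j).1.symm), (hf i).2.trans (hfij ▸ (hf j).2.symm)⟩

theorem finite_schreierGenerators [Finite ι] {A : Set S} (hA : A.Finite)
    (σ : WithOne S → Option ι → WithOne S) (τ : Option ι → WithOne S → WithOne S) :
    (schreierGenerators T A σ τ).Finite := by
  have hfin : ((Set.univ ×ˢ A).image fun p : (Option ι × Option ι) × S =>
      τ p.1.1 (σ (p.2 : WithOne S) p.1.2)).Finite :=
    (Set.finite_univ.prod hA).image _
  refine (hfin.preimage WithOne.coe_injective.injOn).subset ?_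
  rintro x ⟨-, i, j, a, ha, hx⟩
  exact ⟨((i, j), a), ⟨trivial, ha⟩, hx.symm⟩

end GreenIndexPaper

theorem generators_for_subsemigroup_general
    {S : Type*} {ι : Type*} [Semigroup S] (T : Subsemigroup S) (A : Set S)
    (hA : Subsemigroup.closure A = ⊤)
    (h : ι → S)
    (hrep : ∀ i, h i ∉ T)
    (hdistinct : ∀ i j, HrelT T (h i) (h j) → i = j)
    (ρ : WithOne S → Option ι → Option ι) (σ : WithOne S → Option ι → WithOne S)
    (lam : Option ι → WithOne S → Option ι) (τ : Option ι → WithOne S → WithOne S)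
    (hσT : ∀ s i, σ s i ∈ T1 T) (hτT : ∀ i s, τ i s ∈ T1 T)
    (hρeq : ∀ s i, s * repOne h i = repOne h (ρ s i) * σ s i)
    (hlameq : ∀ i s, repOne h i * s = τ i s * repOne h (lam i s))
    (hlamnone : ∀ i s, lam i s = none → repOne h i * s ∈ T1 T)
    (hlamsome : ∀ i s j, lam i s = some j →
        ∃ x : S, (x : WithOne S) = repOne h i * s ∧ x ∉ T ∧ HrelT T x (h j)) :
    Subsemigroup.closure
        {x : S | x ∈ T ∧ ∃ (i j : Option ι) (a : S), a ∈ A ∧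
          (x : WithOne S) = τ i (σ (a : WithOne S) j)} = T ∧
    ((∃ A' : Finset S, Subsemigroup.closure (↑A' : Set S) = ⊤) → FiniteGreenIndex T →
      ∃ B' : Finset S, (↑B' : Set S) ⊆ (T : Set S) ∧
        Subsemigroup.closure (↑B' : Set S) = T) := by
  refine ⟨closure_schreierGenerators_eq hA hrep hσT hτT hρeq hlameq hlamnone hlamsome, ?_⟩
  rintro ⟨A', hA'⟩ hT
  have : Finite ι := finite_of_finiteGreenIndex hrep hdistinct hT
  have hfin := finite_schreierGenerators (T := T) A'.finite_toSet σ τ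
  refine ⟨hfin.toFinset, ?_, ?_⟩ <;> rw [hfin.coe_toFinset]
  · exact schreierGenerators_subset _ σ τ
  · exact closure_schreierGenerators_eq hA' hrep hσT hτT hρeq hlameq hlamnone hlamsome

/-- Schreier-type generators for a subsemigroup; in particular finite
generation passes from `S` to a subsemigroup of finite Green index. -/
theorem generators_for_subsemigroup
    {S : Type*} {ι : Type*} [Semigroup S] (T : Subsemigroup S) (A : Set S)
    (hA : Subsemigroup.closure A = ⊤)
    (h : ι → S)
    (hrep : ∀ i, h i ∉ T)
    (hcover : ∀ s : S, s ∉ T → ∃ i, HrelT T s (h i))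
    (hdistinct : ∀ i j, HrelT T (h i) (h j) → i = j)
    (ρ : WithOne S → Option ι → Option ι) (σ : WithOne S → Option ι → WithOne S)
    (lam : Option ι → WithOne S → Option ι) (τ : Option ι → WithOne S → WithOne S)
    (hσT : ∀ s i, σ s i ∈ T1 T) (hτT : ∀ i s, τ i s ∈ T1 T)
    (hρeq : ∀ s i, s * repOne h i = repOne h (ρ s i) * σ s i)
    (hlameq : ∀ i s, repOne h i * s = τ i s * repOne h (lam i s))
    (hρnone : ∀ s i, ρ s i = none → s * repOne h i ∈ T1 T)
    (hρsome : ∀ s i j, ρ s i = some j →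
        ∃ x : S, (x : WithOne S) = s * repOne h i ∧ x ∉ T ∧ HrelT T x (h j))
    (hlamnone : ∀ i s, lam i s = none → repOne h i * s ∈ T1 T)
    (hlamsome : ∀ i s j, lam i s = some j →
        ∃ x : S, (x : WithOne S) = repOne h i * s ∧ x ∉ T ∧ HrelT T x (h j)) :
    Subsemigroup.closure
        {x : S | x ∈ T ∧ ∃ (i j : Option ι) (a : S), a ∈ A ∧
          (x : WithOne S) = τ i (σ (a : WithOne S) j)} = T ∧
    ((∃ A' : Finset S, Subsemigroup.closure (↑A' : Set S) = ⊤) → FiniteGreenIndex T →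
      ∃ B' : Finset S, (↑B' : Set S) ⊆ (T : Set S) ∧
        Subsemigroup.closure (↑B' : Set S) = T) :=
  generators_for_subsemigroup_general T A hA h hrep hdistinct ρ σ lam τ hσT hτT hρeq hlameq hlamnone
    hlamsome
end
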